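/- arXiv:2211.14566 — 4 statements merged into one kernel-verified Lean document; each statement's English description precedes it below -/
import Mathlib

section
/- For β a nonnegative integer, the identity z^β ψ_{n,m}^{α,β}(z, z̄) = α^{(n-m-β)/2} H_{m+β,n}(√α z, √α z̄) holds on ℂ*, where H_{p,q}(z, z̄) = (-1)^{p+q} e^{|z|²} ∂^{p+q}/(∂z̄^p ∂z^q)(e^{-|z|²}) are the Itô–Hermite polynomials (with parameter 1). -/
/-
Write `G_{a,b}^c(w) = w^a w̄^b e^{c w w̄}`. Its Wirtinger derivatives are again combinations of
such terms: `∂_z G_{a,b} = a G_{a-1,b} + c G_{a,b+1}`, and `∂_z̄ f = conj (∂_z (conj ∘ f))` with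
`conj ∘ G^c_{a,b} = G^{c̄}_{b,a}`. Iterating with Pascal's rule gives closed binomial formulas for
`∂_z^n G_{a,b}` and `∂_z̄^p G_{a,b}`, hence explicit finite expansions of `z^β ψ^{α,β}_{n,m}` and of
`H^α_{p,q}`. Comparing them term by term gives `α^N z^β ψ^{α,β}_{n,m} = H^α_{N,n}` for `N = m + β`,
while `H^α_{p,q}(z) = α^{(p+q)/2} H_{p,q}(√α z)` since the `k`-th term of `H^α_{p,q}` is homogeneous
of degree `p + q - 2k` and carries `α^{p+q-k}`.
-/

open Complex MeasureTheory

noncomputable def wdz (f : ℂ → ℂ) (z : ℂ) : ℂ :=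
  (1/2) * (fderiv ℝ f z 1 - Complex.I * fderiv ℝ f z Complex.I)

noncomputable def wdzbar (f : ℂ → ℂ) (z : ℂ) : ℂ :=
  (1/2) * (fderiv ℝ f z 1 + Complex.I * fderiv ℝ f z Complex.I)

/-- The poly-meromorphic Itô–Hermite function `ψ_{n,m}^{α,β}`, defined via the
Rodrigues formula with iterated Wirtinger derivatives and principal-branch powers. -/
noncomputable def psi (α β : ℝ) (n : ℕ) (m : ℤ) (z : ℂ) : ℂ :=
  (-1 : ℂ)^n * z ^ (-(β:ℂ)) * Complex.exp (α * ‖z‖ ^ 2) *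
    (wdz^[n] (fun w => w ^ ((β:ℂ) + (m:ℂ)) * Complex.exp (-(α * ‖w‖ ^ 2)))) z

/-- Generalized Laguerre polynomial `L_n^{(γ)}(x)` with complex parameter and argument. -/
noncomputable def genLaguerre (n : ℕ) (γ : ℂ) (x : ℂ) : ℂ :=
  ∑ k ∈ Finset.range (n+1),
    (-1 : ℂ)^k * (∏ j ∈ Finset.range (n-k), (γ + k + 1 + j)) /
      ((n-k).factorial * k.factorial) * x^k

/-- Itô–Hermite polynomial `H_{p,q}^α(z, z̄)`. -/
noncomputable def IH (α : ℝ) (p q : ℕ) (z : ℂ) : ℂ :=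
  (-1 : ℂ)^(p+q) * Complex.exp (α * ‖z‖ ^ 2) *
    (wdzbar^[p] (wdz^[q] (fun w => Complex.exp (-(α * ‖w‖ ^ 2))))) z

open ComplexConjugate Finset

noncomputable def gaussMonomial (c : ℂ) (a b : ℕ) (w : ℂ) : ℂ :=
  w ^ a * conj w ^ b * exp (c * (w * conj w))

lemma wdz_of_hasFDerivAt {f : ℂ → ℂ} {z P Q : ℂ}
    (hf : HasFDerivAt f (P • (1 : ℂ →L[ℝ] ℂ) + Q • conjCLE.toContinuousLinearMap) z) :
    wdz f z = P := by
  simp only [wdz, hf.fderiv, _root_.add_apply, _root_.smul_apply, one_apply_eq_self, smul_eq_mul,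
    ContinuousLinearEquiv.coe_coe, ContinuousAlgEquiv.coeCLE_apply, conjCAE_apply, map_one, conj_I]
  linear_combination (Q - P) / 2 * I_sq

lemma wdz_const_mul (K : ℂ) (f : ℂ → ℂ) (z : ℂ) : wdz (fun w => K * f w) z = K * wdz f z := by
  have h : fderiv ℝ (K • f) z = K • fderiv ℝ f z := by rw [fderiv_const_smul_field]; rfl
  simp only [wdz, ← smul_eq_mul (a := K), ← Pi.smul_def, h, _root_.smul_apply]
  simp only [smul_eq_mul]
  ring

lemma wdz_sum {ι : Type*} (s : Finset ι) (g : ι → ℂ → ℂ) (z : ℂ)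
    (hg : ∀ k ∈ s, DifferentiableAt ℝ (g k) z) :
    wdz (fun w => ∑ k ∈ s, g k w) z = ∑ k ∈ s, wdz (g k) z := by
  simp only [wdz, fderiv_fun_sum hg, _root_.sum_apply, mul_sum, ← sum_sub_distrib]

lemma wdzbar_eq_conj_wdz (f : ℂ → ℂ) (z : ℂ) : wdzbar f z = conj (wdz (conj ∘ f) z) := by
  have h : fderiv ℝ (conj ∘ f) z = conjCLE.toContinuousLinearMap.comp (fderiv ℝ f z) :=
    conjLIE.comp_fderiv
  simp only [wdz, wdzbar, h]
  simp [conj_I, map_ofNat]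

lemma wdzbar_const_mul (K : ℂ) (f : ℂ → ℂ) (z : ℂ) :
    wdzbar (fun w => K * f w) z = K * wdzbar f z := by
  simp only [wdzbar_eq_conj_wdz, Function.comp_def, map_mul, wdz_const_mul, conj_conj]

lemma iterate_wdzbar_eq_conj (p : ℕ) (f : ℂ → ℂ) : wdzbar^[p] f = conj ∘ wdz^[p] (conj ∘ f) := by
  induction p with
  | zero => funext z; simp
  | succ p ih =>
    funext z
    rw [Function.iterate_succ_apply', Function.iterate_succ_apply', ih, wdzbar_eq_conj_wdz]
    simp [Function.comp_def]

lemma iterate_wdzbar_const_mul (p : ℕ) (K : ℂ) (f : ℂ → ℂ) :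
    wdzbar^[p] (fun w => K * f w) = fun w => K * wdzbar^[p] f w := by
  induction p with
  | zero => rfl
  | succ p ih =>
    funext z
    rw [Function.iterate_succ_apply', Function.iterate_succ_apply', ih, wdzbar_const_mul]

lemma hasFDerivAt_gaussMonomial (c : ℂ) (a b : ℕ) (z : ℂ) :
    HasFDerivAt (gaussMonomial c a b)
      ((((a : ℂ) * z ^ (a - 1) * conj z ^ b + c * z ^ a * conj z ^ (b + 1)) *
          exp (c * (z * conj z))) • (1 : ℂ →L[ℝ] ℂ) +
        (((b : ℂ) * z ^ a * conj z ^ (b - 1) + c * z ^ (a + 1) * conj z ^ b) *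
          exp (c * (z * conj z))) • conjCLE.toContinuousLinearMap) z := by
  have hconj : HasFDerivAt (fun w : ℂ => conj w) conjCLE.toContinuousLinearMap z :=
    conjCLE.toContinuousLinearMap.hasFDerivAt
  have hza := ((hasDerivAt_pow a z).hasFDerivAt).restrictScalars ℝ
  have hzb := (((hasDerivAt_pow b (conj z)).hasFDerivAt).restrictScalars ℝ).comp z hconj
  have hexp := (((hasFDerivAt_id (𝕜 := ℝ) z).mul hconj).const_mul c).cexp
  refine ((hza.mul hzb).mul hexp).congr_fderiv ?_
  ext v
  simp only [Pi.mul_apply, Function.comp_apply, id_eq, smul_add, _root_.add_apply,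
    _root_.smul_apply, ContinuousLinearEquiv.coe_coe, ContinuousAlgEquiv.coeCLE_apply,
    conjCAE_apply, smul_eq_mul, ContinuousLinearMap.id_apply, ContinuousLinearMap.comp_apply,
    ContinuousLinearMap.coe_restrictScalars', ContinuousLinearMap.toSpanSingleton_apply,
    one_apply_eq_self]
  ring

lemma differentiableAt_gaussMonomial (c : ℂ) (a b : ℕ) (z : ℂ) :
    DifferentiableAt ℝ (gaussMonomial c a b) z :=
  (hasFDerivAt_gaussMonomial c a b z).differentiableAt

lemma wdz_gaussMonomial (c : ℂ) (a b : ℕ) (z : ℂ) :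
    wdz (gaussMonomial c a b) z =
      a * gaussMonomial c (a - 1) b z + c * gaussMonomial c a (b + 1) z := by
  rw [wdz_of_hasFDerivAt (hasFDerivAt_gaussMonomial c a b z), gaussMonomial, gaussMonomial]
  ring

lemma conj_gaussMonomial (c : ℂ) (a b : ℕ) (z : ℂ) :
    conj (gaussMonomial c a b z) = gaussMonomial (conj c) b a z := by
  simp only [gaussMonomial, map_mul, map_pow, ← exp_conj, conj_conj]
  ring_nf

theorem iterate_wdz_gaussMonomial (c : ℂ) (a b n : ℕ) :
    wdz^[n] (gaussMonomial c a b) = fun z => ∑ k ∈ range (n + 1), (n.choose k : ℂ) *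
      (a.descFactorial k * c ^ (n - k) * gaussMonomial c (a - k) (b + (n - k)) z) := by
  induction n with
  | zero => funext z; simp
  | succ n ih =>
    funext z
    rw [Function.iterate_succ_apply', ih, wdz_sum _ _ _ fun k _ =>
      ((differentiableAt_gaussMonomial c _ _ z).const_mul _).const_mul _,
      sum_choose_succ_mul fun i j => a.descFactorial i * c ^ j * gaussMonomial c (a - i) (b + j) z,
      ← sum_add_distrib]
    refine sum_congr rfl fun k hk => ?_
    have hkn : n + 1 - k = n - k + 1 := by have := mem_range.1 hk; omega
    rw [wdz_const_mul, wdz_const_mul, wdz_gaussMonomial, hkn, ← add_assoc, Nat.descFactorial_succ,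
      Nat.sub_sub]
    push_cast
    ring

theorem iterate_wdzbar_gaussMonomial (c : ℂ) (a b p : ℕ) :
    wdzbar^[p] (gaussMonomial c a b) = fun z => ∑ k ∈ range (p + 1), (p.choose k : ℂ) *
      (b.descFactorial k * c ^ (p - k) * gaussMonomial c (a + (p - k)) (b - k) z) := by
  have h : conj ∘ gaussMonomial c a b = gaussMonomial (conj c) b a :=
    funext (conj_gaussMonomial c a b)
  funext z
  simp [iterate_wdzbar_eq_conj, h, iterate_wdz_gaussMonomial, conj_gaussMonomial]

lemma exp_neg_mul_norm_sq (c : ℝ) :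
    (fun w : ℂ => exp (-(c * ‖w‖ ^ 2))) = gaussMonomial (-(c : ℂ)) 0 0 := by
  funext w
  simp [gaussMonomial, mul_conj, normSq_eq_norm_sq]

lemma gaussMonomial_mul_exp (c : ℝ) (a b : ℕ) (w : ℂ) :
    gaussMonomial (-(c : ℂ)) a b w * exp (c * ‖w‖ ^ 2) = w ^ a * conj w ^ b := by
  rw [gaussMonomial, mul_assoc, ← exp_add, mul_conj, normSq_eq_norm_sq]
  simp

lemma neg_one_pow_add_mul_neg_pow {R : Type*} [CommRing R] (x : R) (k j : ℕ) :
    (-1) ^ (k + j) * (-x) ^ j = (-1) ^ k * x ^ j := by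
  rw [neg_pow x, pow_add, mul_assoc, ← mul_assoc ((-1) ^ j), ← mul_pow]
  simp

lemma sum_range_eq_sum_range_of_eq_zero {M : Type*} [AddCommMonoid M] {f : ℕ → M} {a b : ℕ}
    (ha : ∀ k, a ≤ k → f k = 0) (hb : ∀ k, b ≤ k → f k = 0) :
    ∑ k ∈ range a, f k = ∑ k ∈ range b, f k := by
  wlog hab : a ≤ b generalizing a b
  · exact (this hb ha (le_of_not_ge hab)).symm
  exact sum_subset (range_subset_range.2 hab) fun k _ hk => ha k (by simpa using hk)

lemma choose_mul_descFactorial_comm (n N k : ℕ) :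
    n.choose k * N.descFactorial k = N.choose k * n.descFactorial k := by
  rw [Nat.descFactorial_eq_factorial_mul_choose, Nat.descFactorial_eq_factorial_mul_choose]
  ring

theorem IH_eq_sum (α : ℝ) (p q : ℕ) (w : ℂ) :
    IH α p q w = ∑ k ∈ range (p + 1), (-1) ^ k * (p.choose k : ℂ) * q.descFactorial k *
      (α : ℂ) ^ (p + q - k) * w ^ (p - k) * conj w ^ (q - k) := by
  have hq : wdz^[q] (gaussMonomial (-α) 0 0) =
      fun w => (-α : ℂ) ^ q * gaussMonomial (-α) 0 q w := by
    rw [iterate_wdz_gaussMonomial]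
    funext w
    rw [sum_eq_single 0 (fun k _ hk => by simp [Nat.descFactorial_of_lt (Nat.pos_of_ne_zero hk)])
      (by simp)]
    simp
  rw [IH, exp_neg_mul_norm_sq, hq, iterate_wdzbar_const_mul, iterate_wdzbar_gaussMonomial]
  simp only [mul_sum]
  refine sum_congr rfl fun k hk => ?_
  obtain ⟨j, rfl⟩ := Nat.exists_eq_add_of_le (Nat.le_of_lt_succ (mem_range.1 hk))
  have hsign :
      (-1 : ℂ) ^ (k + j + q) * (-α : ℂ) ^ q * (-α : ℂ) ^ j = (-1) ^ k * (α : ℂ) ^ (j + q) := by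
    rw [mul_assoc, ← pow_add, add_comm q, add_assoc, neg_one_pow_add_mul_neg_pow]
  rw [show k + j + q - k = j + q by omega, Nat.add_sub_cancel_left, zero_add]
  linear_combination (↑((k + j).choose k) * ↑(q.descFactorial k) *
    (gaussMonomial (-α) j (q - k) w * exp (α * ‖w‖ ^ 2))) * hsign +
    (-1) ^ k * ↑((k + j).choose k) * ↑(q.descFactorial k) * (α : ℂ) ^ (j + q) *
    gaussMonomial_mul_exp α j (q - k) w

theorem pow_mul_mul_psi_eq_IH (α : ℝ) (β n N : ℕ) (m : ℤ) (hN : (N : ℤ) = m + β) {z : ℂ}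
    (hz : z ≠ 0) : (α : ℂ) ^ N * (z ^ β * psi α β n m z) = IH α N n z := by
  have hNc : ((β : ℝ) : ℂ) + m = N := by exact_mod_cast (by omega : (β : ℤ) + m = N)
  have hF : (fun w : ℂ => w ^ (((β : ℝ) : ℂ) + m) * exp (-(α * ‖w‖ ^ 2))) =
      gaussMonomial (-α) N 0 := by
    funext w
    rw [hNc, cpow_natCast]
    simp [gaussMonomial, mul_conj, normSq_eq_norm_sq]
  have hpre : z ^ β * ((-1) ^ n * z ^ (-((β : ℝ) : ℂ)) * exp (α * ‖z‖ ^ 2)) =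
      (-1) ^ n * exp (α * ‖z‖ ^ 2) := by
    rw [ofReal_natCast, cpow_neg, cpow_natCast]
    field_simp
  rw [psi, hF, iterate_wdz_gaussMonomial, ← mul_assoc (z ^ β), hpre, IH_eq_sum]
  let T k := (-1) ^ k * (n.choose k : ℂ) * N.descFactorial k * (α : ℂ) ^ (N + n - k) *
    z ^ (N - k) * conj z ^ (n - k)
  calc _ = ∑ k ∈ range (n + 1), T k := by
        rw [mul_sum, mul_sum]
        refine sum_congr rfl fun k hk => ?_
        obtain ⟨j, rfl⟩ := Nat.exists_eq_add_of_le (Nat.le_of_lt_succ (mem_range.1 hk))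
        simp only [T]
        rw [show N + (k + j) - k = N + j by omega, Nat.add_sub_cancel_left, zero_add, pow_add]
        linear_combination (α : ℂ) ^ N * ((k + j).choose k) * N.descFactorial k *
          (gaussMonomial (-α) (N - k) j z * exp (α * ‖z‖ ^ 2)) *
            neg_one_pow_add_mul_neg_pow (α : ℂ) k j +
          (α : ℂ) ^ N * (-1) ^ k * ((k + j).choose k) * N.descFactorial k * (α : ℂ) ^ j *
            gaussMonomial_mul_exp α (N - k) j z
    _ = ∑ k ∈ range (N + 1), T k :=
        sum_range_eq_sum_range_of_eq_zero
          (fun k hk => by simp [T, Nat.choose_eq_zero_of_lt (Nat.lt_of_succ_le hk)])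
          (fun k hk => by simp [T, Nat.descFactorial_of_lt (Nat.lt_of_succ_le hk)])
    _ = _ := sum_congr rfl fun k _ => by
        have hc : (n.choose k : ℂ) * N.descFactorial k = N.choose k * n.descFactorial k := by
          exact_mod_cast choose_mul_descFactorial_comm n N k
        simp only [T]
        rw [add_comm N n]
        linear_combination (-1) ^ k * (α : ℂ) ^ (n + N - k) * z ^ (N - k) * conj z ^ (n - k) * hc

theorem IH_eq_sqrt_pow_mul_IH_one {α : ℝ} (hα : 0 ≤ α) (p q : ℕ) (z : ℂ) :
    IH α p q z = (√α : ℂ) ^ (p + q) * IH 1 p q (√α * z) := by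
  have hsq : (α : ℂ) = (√α : ℂ) ^ 2 := by rw [← ofReal_pow, Real.sq_sqrt hα]
  rw [IH_eq_sum, IH_eq_sum, mul_sum]
  refine sum_congr rfl fun k hk => ?_
  rcases lt_or_ge q k with hqk | hkq
  · simp [Nat.descFactorial_of_lt hqk]
  obtain ⟨i, rfl⟩ := Nat.exists_eq_add_of_le (Nat.le_of_lt_succ (mem_range.1 hk))
  obtain ⟨j, rfl⟩ := Nat.exists_eq_add_of_le hkq
  rw [show k + i + (k + j) - k = k + i + j by omega, Nat.add_sub_cancel_left,
    Nat.add_sub_cancel_left, map_mul, conj_ofReal, ofReal_one, hsq]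
  ring

theorem stmt1 (α : ℝ) (hα : 0 < α) (β : ℕ) (n : ℕ) (m : ℤ) (hm : 0 ≤ m + β) (z : ℂ)
    (hz : z ≠ 0) :
    z ^ β * psi α β n m z =
      (((α : ℝ) ^ (((n:ℝ) - m - β)/2) : ℝ) : ℂ) *
        IH 1 (m + β).toNat n ((Real.sqrt α : ℂ) * z) := by
  set N := (m + β).toNat
  have hN : (N : ℤ) = m + β := Int.toNat_of_nonneg hm
  have hscale : α ^ (((n : ℝ) - m - β) / 2) * α ^ N = √α ^ (N + n) := by
    rw [Real.sqrt_eq_rpow, ← Real.rpow_natCast (α ^ (1 / 2 : ℝ)), ← Real.rpow_mul hα.le,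
      ← Real.rpow_natCast α N, ← Real.rpow_add hα]
    congr 1
    have hNr : (N : ℝ) = m + β := by exact_mod_cast hN
    push_cast
    rw [hNr]
    ring
  apply mul_left_cancel₀ (pow_ne_zero N (ofReal_ne_zero.2 hα.ne'))
  rw [pow_mul_mul_psi_eq_IH α β n N m hN hz, IH_eq_sqrt_pow_mul_IH_one hα.le, ← ofReal_pow,
    ← ofReal_pow, ← hscale]
  push_cast
  ring
end

section
/- The functions ψ_{n,m}^{α,β} satisfy the raising relation -(1/α)(∂/∂z̄ - α z) ψ_{n,m}^{α,β}(z, z̄) = ψ_{n,m+1}^{α,β}(z, z̄) on ℂ*, where ∂/∂z̄ is the conjugate Wirtinger derivative. -/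
open Complex MeasureTheory

/-!
Off the branch cut of `w ^ (β + m)`, and on all of `ℂ \ {0}` when `β + m` is an integer, the
Rodrigues formula can be evaluated in closed form: by induction,
`∂ⁿ (w ^ c * exp (-α ‖w‖²)) = w ^ (c - n) * exp (-α ‖w‖²) * P_{c,n} (α ‖w‖²)` for polynomials
`P_{c,n}` obeying a first-order recursion, so `ψ_{n,m} = (-1)ⁿ w ^ (m - n) P_{β+m,n} (α ‖w‖²)`.
The raising relation then reduces to the identity `P_{c+1,n} = P_{c,n} - P_{c,n}'`.

On the negative real axis with `β + m ∉ ℤ`, `fderiv` takes its junk value `0`: `w ^ c` is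
discontinuous there, so for `n ≥ 1` the iterated derivative, and with it both sides, vanish on the
axis. Each step uses that a function which vanishes on the axis and equals `u w * B (‖w‖²)` above
it, with `u` continuous and nonzero up to the axis, has zero derivative wherever it is
differentiable: continuity forces `B (‖z‖²) = 0`, and then `‖z + t I‖² - ‖z‖² = t²`.
-/

open Polynomial Filter Topology Set ComplexConjugate
open scoped Real

noncomputable def rodriguesPoly (c : ℂ) : ℕ → ℂ[X]
  | 0 => 1
  | n + 1 => C (c - n) * rodriguesPoly c n - X * rodriguesPoly c n +
      X * derivative (rodriguesPoly c n)

lemma rodriguesPoly_add_one (c : ℂ) (n : ℕ) :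
    rodriguesPoly (c + 1) n = rodriguesPoly c n - derivative (rodriguesPoly c n) := by
  induction n with
  | zero => simp [rodriguesPoly]
  | succ n ih =>
    simp only [rodriguesPoly, ih, derivative_mul, derivative_C,
      derivative_X, map_sub, map_add, map_one]
    ring

noncomputable def wirtingerCLM (p q : ℂ) : ℂ →L[ℝ] ℂ :=
  p • ContinuousLinearMap.id ℝ ℂ + q • conjCLE.toContinuousLinearMap

@[simp]
lemma wirtingerCLM_apply (p q h : ℂ) : wirtingerCLM p q h = p * h + q * conj h := by
  simp [wirtingerCLM]

section Wirtinger

variable {f g : ℂ → ℂ} {p q z : ℂ}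

lemma wdz_eq_of_hasFDerivAt (hf : HasFDerivAt f (wirtingerCLM p q) z) : wdz f z = p := by
  simp only [wdz, hf.fderiv, wirtingerCLM_apply, conj_I, map_one]
  linear_combination (q - p) / 2 * I_sq

lemma wdzbar_eq_of_hasFDerivAt (hf : HasFDerivAt f (wirtingerCLM p q) z) :
    wdzbar f z = q := by
  simp only [wdzbar, hf.fderiv, wirtingerCLM_apply, conj_I, map_one]
  linear_combination (p - q) / 2 * I_sq

lemma Filter.EventuallyEq.wdz_eq (h : f =ᶠ[𝓝 z] g) : wdz f z = wdz g z := by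
  rw [wdz, h.fderiv_eq, wdz]

lemma Filter.EventuallyEq.wdzbar_eq (h : f =ᶠ[𝓝 z] g) : wdzbar f z = wdzbar g z := by
  rw [wdzbar, h.fderiv_eq, wdzbar]

lemma hasFDerivAt_mul_conj (z : ℂ) :
    HasFDerivAt (fun w : ℂ => w * conj w) (wirtingerCLM (conj z) z) z := by
  refine ((hasFDerivAt_id z).mul' conjCLE.toContinuousLinearMap.hasFDerivAt).congr_fderiv ?_
  ext h; simp; ring

lemma hasFDerivAt_mul_comp_normSq {A B : ℂ → ℂ} {a b : ℂ} (hA : HasDerivAt A a z)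
    (hB : HasDerivAt B b (‖z‖ ^ 2)) :
    HasFDerivAt (fun w => A w * B (‖w‖ ^ 2))
      (wirtingerCLM (a * B (‖z‖ ^ 2) + A z * b * conj z) (A z * b * z)) z := by
  simp only [← mul_conj'] at hB ⊢
  have hBN := (hB.hasFDerivAt.restrictScalars ℝ).comp z (hasFDerivAt_mul_conj z)
  refine ((hA.hasFDerivAt.restrictScalars ℝ).mul' hBN).congr_fderiv ?_
  ext h; simp; ring

end Wirtinger

lemma Polynomial.hasDerivAt_eval_const_mul (P : ℂ[X]) (a t : ℂ) :
    HasDerivAt (fun s => P.eval (a * s)) (P.derivative.eval (a * t) * a) t := by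
  have h := (P.hasDerivAt (a * t)).comp t ((hasDerivAt_id' t).const_mul a)
  rwa [mul_one] at h

-- A neighbourhood of each of its points on which every `w ↦ w ^ (c - n)` is holomorphic.
def cpowDomain (c : ℂ) : Set ℂ := slitPlane ∪ {z | z ≠ 0 ∧ ∃ k : ℤ, c = k}

lemma isOpen_cpowDomain (c : ℂ) : IsOpen (cpowDomain c) :=
  isOpen_slitPlane.union (isOpen_ne.inter isOpen_const)

lemma ne_zero_of_mem_cpowDomain {c z : ℂ} (hz : z ∈ cpowDomain c) : z ≠ 0 :=
  hz.elim slitPlane_ne_zero And.left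

lemma cpowDomain_add_intCast (c : ℂ) (k : ℤ) : cpowDomain (c + k) = cpowDomain c := by
  have : (∃ j : ℤ, c + k = j) ↔ ∃ j : ℤ, c = j :=
    ⟨fun ⟨j, hj⟩ => ⟨j - k, by push_cast; rw [← hj]; ring⟩,
      fun ⟨j, hj⟩ => ⟨j + k, by push_cast; rw [hj]⟩⟩
  simp only [cpowDomain, this]

lemma cpowDomain_sub_natCast (c : ℂ) (n : ℕ) : cpowDomain (c - n) = cpowDomain c := by
  simpa [sub_eq_add_neg] using cpowDomain_add_intCast c (-n)

lemma hasDerivAt_cpow_const_of_mem_cpowDomain {c z : ℂ} (hz : z ∈ cpowDomain c) :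
    HasDerivAt (· ^ c) (c * z ^ (c - 1)) z := by
  rcases hz with hz | ⟨hz, k, rfl⟩
  · exact (hasStrictDerivAt_cpow_const hz).hasDerivAt
  · have h := hasDerivAt_zpow k z (Or.inl hz)
    simp only [← cpow_intCast, Int.cast_sub, Int.cast_one] at h
    exact h

lemma Polynomial.hasDerivAt_exp_mul_eval (P : ℂ[X]) (a t : ℂ) :
    HasDerivAt (fun s => exp (-(a * s)) * P.eval (a * s))
      (a * exp (-(a * t)) * (P.derivative.eval (a * t) - P.eval (a * t))) t := by
  have hexp : HasDerivAt (fun s => exp (-(a * s))) (exp (-(a * t)) * -a) t := by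
    simpa using ((hasDerivAt_id' t).const_mul a).neg.cexp
  exact (hexp.mul (P.hasDerivAt_eval_const_mul a t)).congr_deriv (by ring)

lemma iterate_wdz_cpow_mul_exp (α : ℝ) (c : ℂ) (n : ℕ) {z : ℂ} (hz : z ∈ cpowDomain c) :
    wdz^[n] (fun w => w ^ c * exp (-(α * ‖w‖ ^ 2))) z =
      z ^ (c - n) * (exp (-(α * ‖z‖ ^ 2)) * (rodriguesPoly c n).eval ((α : ℂ) * ‖z‖ ^ 2)) := by
  induction n generalizing z with
  | zero => simp [rodriguesPoly]
  | succ n ih =>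
    have hev : wdz^[n] (fun w => w ^ c * exp (-(α * ‖w‖ ^ 2))) =ᶠ[𝓝 z] fun w =>
        w ^ (c - n) * (exp (-(α * ‖w‖ ^ 2)) * (rodriguesPoly c n).eval ((α : ℂ) * ‖w‖ ^ 2)) :=
      ((isOpen_cpowDomain c).eventually_mem hz).mono fun w hw => ih hw
    have hA := hasDerivAt_cpow_const_of_mem_cpowDomain
      (show z ∈ cpowDomain (c - n) by rwa [cpowDomain_sub_natCast])
    have hF := hasFDerivAt_mul_comp_normSq hA
      ((rodriguesPoly c n).hasDerivAt_exp_mul_eval α (‖z‖ ^ 2))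
    rw [Function.iterate_succ_apply', hev.wdz_eq, wdz_eq_of_hasFDerivAt hF]
    have hz0 := ne_zero_of_mem_cpowDomain hz
    rw [show c - n - 1 = c - (n + 1 : ℕ) by push_cast; ring,
      show c - n = c - (n + 1 : ℕ) + 1 by push_cast; ring, cpow_add _ _ hz0, cpow_one, ← mul_conj']
    simp only [rodriguesPoly, eval_add, eval_sub, eval_mul, eval_C, eval_X, Nat.cast_add,
      Nat.cast_one]
    ring

noncomputable def psiClosedForm (α : ℝ) (c : ℂ) (n : ℕ) (m : ℤ) (w : ℂ) : ℂ :=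
  (-1) ^ n * w ^ (m - n) * (rodriguesPoly c n).eval ((α : ℂ) * ‖w‖ ^ 2)

lemma psiClosedForm_raising {α : ℝ} (hα : (α : ℂ) ≠ 0) (c : ℂ) (n : ℕ) (m : ℤ) {z : ℂ}
    (hz : z ≠ 0) :
    -(1 / (α : ℂ)) * (wdzbar (psiClosedForm α c n m) z - α * z * psiClosedForm α c n m z) =
      psiClosedForm α (c + 1) n (m + 1) z := by
  have hA := (hasDerivAt_zpow (m - n) z (Or.inl hz)).const_mul ((-1 : ℂ) ^ n)
  have hF : HasFDerivAt (psiClosedForm α c n m) _ z := hasFDerivAt_mul_comp_normSq hA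
    ((rodriguesPoly c n).hasDerivAt_eval_const_mul α (‖z‖ ^ 2))
  rw [wdzbar_eq_of_hasFDerivAt hF, psiClosedForm, psiClosedForm, rodriguesPoly_add_one, eval_sub,
    show m + 1 - n = m - n + 1 by ring, zpow_add_one₀ hz]
  field_simp
  ring

lemma psi_eq_psiClosedForm_of_iterate {α β : ℝ} {n : ℕ} {m : ℤ} {z : ℂ} (hz : z ≠ 0)
    (h : wdz^[n] (fun w => w ^ ((β : ℂ) + m) * exp (-(α * ‖w‖ ^ 2))) z =
      z ^ ((β : ℂ) + m - n) *
        (exp (-(α * ‖z‖ ^ 2)) * (rodriguesPoly (β + m) n).eval ((α : ℂ) * ‖z‖ ^ 2))) :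
    psi α β n m z = psiClosedForm α (β + m) n m z := by
  have hpow : z ^ (-(β : ℂ)) * z ^ ((β : ℂ) + m - n) = z ^ (m - n : ℤ) := by
    rw [← cpow_add _ _ hz, ← cpow_intCast]
    push_cast
    ring_nf
  rw [psi, h, psiClosedForm, ← hpow]
  have hexp := exp_add (α * ‖z‖ ^ 2 : ℂ) (-(α * ‖z‖ ^ 2))
  rw [add_neg_cancel, exp_zero] at hexp
  linear_combination -(-1) ^ n * z ^ (-(β : ℂ)) * z ^ ((β : ℂ) + m - n) *
    (rodriguesPoly (β + m) n).eval ((α : ℂ) * ‖z‖ ^ 2) * hexp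

lemma psi_eq_psiClosedForm {α β : ℝ} {n : ℕ} {m : ℤ} {z : ℂ} (hz : z ∈ cpowDomain (β + m)) :
    psi α β n m z = psiClosedForm α (β + m) n m z :=
  psi_eq_psiClosedForm_of_iterate (ne_zero_of_mem_cpowDomain hz) (iterate_wdz_cpow_mul_exp α _ n hz)

lemma psi_zero_eq_psiClosedForm {α β : ℝ} {m : ℤ} {z : ℂ} (hz : z ≠ 0) :
    psi α β 0 m z = psiClosedForm α (β + m) 0 m z :=
  psi_eq_psiClosedForm_of_iterate hz (by simp [rodriguesPoly])

lemma raising_of_eventuallyEq {α β : ℝ} (hα : (α : ℂ) ≠ 0) {n : ℕ} {m : ℤ} {z : ℂ} (hz : z ≠ 0)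
    (h : psi α β n m =ᶠ[𝓝 z] psiClosedForm α (β + m) n m)
    (h' : psi α β n (m + 1) z = psiClosedForm α (β + (m + 1 : ℤ)) n (m + 1) z) :
    -(1 / (α : ℂ)) * (wdzbar (psi α β n m) z - α * z * psi α β n m z) = psi α β n (m + 1) z := by
  rw [h.wdzbar_eq, h.self_of_nhds, h', psiClosedForm_raising hα _ _ _ hz]
  push_cast
  ring_nf

lemma eq_zero_of_hasDerivWithinAt_Ioi_of_eq_mul {φ a R : ℝ → ℂ} {d L : ℂ}
    (hφ : HasDerivWithinAt φ d (Ioi 0) 0) (hφ0 : φ 0 = 0) (hφaR : φ =ᶠ[𝓝[>] 0] a * R)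
    (ha : Tendsto a (𝓝[>] 0) (𝓝 L)) (hL : L ≠ 0) (hR : HasDerivAt R 0 0) : d = 0 := by
  have hR0 : R 0 = 0 := by
    have hlim : Tendsto φ (𝓝[>] 0) (𝓝 (L * R 0)) :=
      (ha.mul hR.continuousAt.continuousWithinAt.tendsto).congr' hφaR.symm
    have hcont : Tendsto φ (𝓝[>] 0) (𝓝 0) := hφ0 ▸ hφ.continuousWithinAt.tendsto
    exact (mul_eq_zero.mp (tendsto_nhds_unique hlim hcont)).resolve_left hL
  have hRo : R =o[𝓝 0] fun t => t := by
    simpa [hR0] using hR.isLittleO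
  have hφo : φ =o[𝓝[>] 0] fun t => t := by
    simpa using hφaR.trans_isLittleO ((ha.isBigO_one ℝ).mul_isLittleO (hRo.mono nhdsWithin_le_nhds))
  have hφ' : HasDerivWithinAt φ 0 (Ioi 0) 0 := by
    rw [hasDerivWithinAt_iff_isLittleO]
    simpa [hφ0] using hφo
  exact (uniqueDiffWithinAt_Ioi 0).eq_deriv _ hφ hφ'

lemma hasDerivAt_comp_add_ofReal_mul {g : ℂ → ℂ} {L : ℂ →L[ℝ] ℂ} {z : ℂ} (hg : HasFDerivAt g L z)
    (v : ℂ) : HasDerivAt (fun t : ℝ => g (z + t * v)) (L v) 0 := by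
  have hline : HasDerivAt (fun t : ℝ => z + t * v) v 0 := by
    simpa using ((hasDerivAt_id (0 : ℝ)).ofReal_comp.mul_const v).const_add z
  exact hg.comp_hasDerivAt_of_eq 0 hline (by simp)

lemma ne_zero_of_re_neg {z : ℂ} (hz : z.re < 0) : z ≠ 0 := by
  rintro rfl
  simp at hz

lemma re_neg_of_notMem_slitPlane {z : ℂ} (h : z ∉ slitPlane) (hz : z ≠ 0) :
    z.re < 0 ∧ z.im = 0 := by
  rw [mem_slitPlane_iff, not_or, not_lt, not_ne_iff] at h
  exact ⟨h.1.lt_of_ne fun h' => hz (ext h' h.2), h.2⟩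

lemma tendsto_add_ofReal_mul_I_nhdsWithin_im_pos {z : ℂ} (hz : z.im = 0) :
    Tendsto (fun t : ℝ => z + t * I) (𝓝[>] 0) (𝓝[{w | 0 < w.im}] z) := by
  refine tendsto_nhdsWithin_iff.mpr ⟨?_, ?_⟩
  · simpa using ((continuous_ofReal.tendsto 0).mono_left nhdsWithin_le_nhds).mul_const I
      |>.const_add z
  · filter_upwards [self_mem_nhdsWithin] with t ht
    simpa [hz] using ht

lemma tendsto_sub_ofReal_mul_I_nhdsWithin_im_neg {z : ℂ} (hz : z.im = 0) :
    Tendsto (fun t : ℝ => z - t * I) (𝓝[>] 0) (𝓝[{w | w.im < 0}] z) := by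
  refine tendsto_nhdsWithin_iff.mpr ⟨?_, ?_⟩
  · simpa using ((continuous_ofReal.tendsto 0).mono_left nhdsWithin_le_nhds).mul_const I
      |>.const_sub z
  · filter_upwards [self_mem_nhdsWithin] with t ht
    simpa [hz] using ht

lemma hasDerivAt_comp_norm_add_ofReal_mul_I_sq {B : ℂ → ℂ} {z : ℂ} (hz : z.im = 0)
    (hB : DifferentiableAt ℂ B (‖z‖ ^ 2)) :
    HasDerivAt (fun t : ℝ => B (‖z + t * I‖ ^ 2)) 0 0 := by
  have hnorm : ∀ t : ℝ, (‖z + t * I‖ ^ 2 : ℂ) = ((z.re ^ 2 + t ^ 2 : ℝ) : ℂ) := by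
    intro t
    rw [← ofReal_pow, Complex.sq_norm, normSq_apply]
    simp [hz, sq]
  have hB' := hB.hasDerivAt
  rw [show (‖z‖ ^ 2 : ℂ) = ((z.re ^ 2 + 0 ^ 2 : ℝ) : ℂ) by simpa using hnorm 0] at hB'
  simp only [hnorm]
  have h := hB'.comp_ofReal.scomp (0 : ℝ) (((hasDerivAt_id' 0).pow 2).const_add (z.re ^ 2))
  exact h.congr_deriv (by simp)

lemma fderiv_eq_zero_of_eq_zero_on_real_axis {g u B : ℂ → ℂ} {z : ℂ} (hz : z.im = 0)
    (h_axis : ∀ᶠ w in 𝓝 z, w.im = 0 → g w = 0)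
    (h_upper : ∀ᶠ w in 𝓝[{w | 0 < w.im}] z, g w = u w * B (‖w‖ ^ 2))
    (hu : ContinuousWithinAt u {w | 0 < w.im} z) (hu0 : u z ≠ 0)
    (hB : DifferentiableAt ℂ B (‖z‖ ^ 2)) : fderiv ℝ g z = 0 := by
  by_cases hg : DifferentiableAt ℝ g z
  swap
  · exact fderiv_zero_of_not_differentiableAt hg
  have hL1 : fderiv ℝ g z 1 = 0 := by
    have hconst : (fun t : ℝ => g (z + t * 1)) =ᶠ[𝓝 0] fun _ => 0 := by
      have hcont : Tendsto (fun t : ℝ => z + t * 1) (𝓝 0) (𝓝 z) := by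
        simpa using ((continuous_ofReal.tendsto 0).const_add z)
      filter_upwards [hcont.eventually h_axis] with t ht
      exact ht (by simp [hz])
    exact (hasDerivAt_comp_add_ofReal_mul hg.hasFDerivAt 1).unique
      ((hasDerivAt_const 0 0).congr_of_eventuallyEq hconst)
  have hLI : fderiv ℝ g z I = 0 := by
    have hup := tendsto_add_ofReal_mul_I_nhdsWithin_im_pos hz
    refine eq_zero_of_hasDerivWithinAt_Ioi_of_eq_mul
      (hasDerivAt_comp_add_ofReal_mul hg.hasFDerivAt I).hasDerivWithinAt
      (by simpa using h_axis.self_of_nhds hz) (hup.eventually h_upper)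
      ((hu.tendsto.comp hup).congr fun t => by simp) hu0
      (hasDerivAt_comp_norm_add_ofReal_mul_I_sq hz hB)
  refine ContinuousLinearMap.coe_injective (basisOneI.ext fun i => ?_)
  fin_cases i <;> simp [hL1, hLI]

lemma exists_intCast_eq_of_continuousWithinAt_cpow {c z : ℂ} (hre : z.re < 0) (him : z.im = 0)
    (h : ContinuousWithinAt (· ^ c) {w | w.im < 0} z) : ∃ k : ℤ, c = k := by
  have hz0 := ne_zero_of_re_neg hre
  have hbelow : Tendsto (· ^ c) (𝓝[{w | w.im < 0}] z)
      (𝓝 (exp ((Real.log ‖z‖ - π * I) * c))) := by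
    refine ((continuous_exp.tendsto _).comp
      ((tendsto_log_nhdsWithin_im_neg_of_re_neg_of_im_zero hre him).mul_const c)).congr' ?_
    filter_upwards [self_mem_nhdsWithin] with w hw
    have hw0 : w ≠ 0 := by rintro rfl; simp at hw
    simp [cpow_def_of_ne_zero hw0]
  have hval : z ^ c = exp ((Real.log ‖z‖ + π * I) * c) := by
    rw [cpow_def_of_ne_zero hz0, log, arg_eq_pi_iff.mpr ⟨hre, him⟩]
  have hpath := tendsto_sub_ofReal_mul_I_nhdsWithin_im_neg him
  have heq := tendsto_nhds_unique (h.tendsto.comp hpath) (hbelow.comp hpath)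
  obtain ⟨k, hk⟩ := exp_eq_one_iff.mp <| show exp (c * (2 * π * I)) = 1 by
    rw [show c * (2 * π * I) = (Real.log ‖z‖ + π * I) * c - (Real.log ‖z‖ - π * I) * c by ring,
      exp_sub, ← hval, heq, div_self (exp_ne_zero _)]
  exact ⟨k, mul_right_cancel₀ two_pi_I_ne_zero hk⟩

lemma continuousWithinAt_cpow_const_of_re_neg {z : ℂ} (hre : z.re < 0) (him : z.im = 0) (s : ℂ) :
    ContinuousWithinAt (· ^ s) {w | 0 ≤ w.im} z := by
  have hz0 := ne_zero_of_re_neg hre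
  refine (continuous_exp.continuousAt.comp_continuousWithinAt
    ((continuousWithinAt_log_of_re_neg_of_im_zero hre him).mul continuousWithinAt_const))
    |>.congr_of_eventuallyEq ?_ (cpow_def_of_ne_zero hz0 s)
  filter_upwards [nhdsWithin_le_nhds (isOpen_ne.mem_nhds hz0)] with w hw
  exact cpow_def_of_ne_zero hw s

lemma fderiv_cpow_mul_exp_eq_zero (α : ℝ) {c z : ℂ} (hc : ∀ k : ℤ, c ≠ k) (hre : z.re < 0)
    (him : z.im = 0) : fderiv ℝ (fun w => w ^ c * exp (-(α * ‖w‖ ^ 2))) z = 0 := by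
  refine fderiv_zero_of_not_differentiableAt fun hd => ?_
  have hcont : ContinuousAt (fun w => w ^ c * exp (-(α * ‖w‖ ^ 2)) * exp (α * ‖w‖ ^ 2)) z :=
    hd.continuousAt.mul (by fun_prop)
  obtain ⟨k, hk⟩ := exists_intCast_eq_of_continuousWithinAt_cpow (c := c) hre him
    (hcont.continuousWithinAt.congr (fun w _ => by simp [mul_assoc, ← exp_add]) (by
      simp [mul_assoc, ← exp_add]))
  exact hc k hk

lemma iterate_wdz_cpow_mul_exp_eq_zero (α : ℝ) {c : ℂ} (hc : ∀ k : ℤ, c ≠ k) (n : ℕ) {z : ℂ}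
    (hre : z.re < 0) (him : z.im = 0) :
    wdz^[n + 1] (fun w => w ^ c * exp (-(α * ‖w‖ ^ 2))) z = 0 := by
  induction n generalizing z with
  | zero => simp [wdz, fderiv_cpow_mul_exp_eq_zero α hc hre him]
  | succ n ih =>
    have hz0 := ne_zero_of_re_neg hre
    have hfd := fderiv_eq_zero_of_eq_zero_on_real_axis (u := (· ^ (c - (n + 1 : ℕ)))) him
      (((continuous_re.tendsto z).eventually_lt_const hre).mono fun w hw hwim => ih hw hwim)
      (eventually_nhdsWithin_of_forall fun w hw =>
        iterate_wdz_cpow_mul_exp α c (n + 1) (Or.inl (mem_slitPlane_iff.mpr (Or.inr hw.ne'))))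
      ((continuousWithinAt_cpow_const_of_re_neg hre him _).mono fun w (hw : 0 < w.im) => hw.le)
      (cpow_ne_zero_iff.mpr (Or.inl hz0))
      ((rodriguesPoly c (n + 1)).hasDerivAt_exp_mul_eval α _).differentiableAt
    rw [Function.iterate_succ_apply', wdz, hfd]
    simp

lemma psi_succ_eq_zero_of_re_neg {α β : ℝ} {m : ℤ} (hc : ∀ k : ℤ, (β : ℂ) + m ≠ k) (n : ℕ)
    {z : ℂ} (hre : z.re < 0) (him : z.im = 0) : psi α β (n + 1) m z = 0 := by
  rw [psi, iterate_wdz_cpow_mul_exp_eq_zero α hc n hre him, mul_zero]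

lemma raising_of_re_neg {α β : ℝ} {m : ℤ} (hc : ∀ k : ℤ, (β : ℂ) + m ≠ k) (n : ℕ)
    {z : ℂ} (hre : z.re < 0) (him : z.im = 0) :
    -(1 / (α : ℂ)) * (wdzbar (psi α β (n + 1) m) z - α * z * psi α β (n + 1) m z) =
      psi α β (n + 1) (m + 1) z := by
  have hz0 := ne_zero_of_re_neg hre
  have hc' : ∀ k : ℤ, (β : ℂ) + (m + 1 : ℤ) ≠ k := fun k hk =>
    hc (k - 1) (by push_cast at hk ⊢; rw [← hk]; ring)
  have hfd := fderiv_eq_zero_of_eq_zero_on_real_axis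
    (u := fun w => (-1) ^ (n + 1) * w ^ (m - (n + 1 : ℕ))) him
    (((continuous_re.tendsto z).eventually_lt_const hre).mono
      fun w hw hwim => psi_succ_eq_zero_of_re_neg hc n hw hwim)
    (eventually_nhdsWithin_of_forall fun w hw =>
      psi_eq_psiClosedForm (Or.inl (mem_slitPlane_iff.mpr (Or.inr hw.ne'))))
    (continuousAt_const.mul (continuousAt_zpow₀ z _ (Or.inl hz0))).continuousWithinAt
    (mul_ne_zero (by simp) (zpow_ne_zero _ hz0))
    ((rodriguesPoly _ (n + 1)).hasDerivAt_eval_const_mul α _).differentiableAt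
  rw [psi_succ_eq_zero_of_re_neg hc n hre him, psi_succ_eq_zero_of_re_neg hc' n hre him, wdzbar,
    hfd]
  simp

theorem stmt6_general (α β : ℝ) (hα : 0 < α) (n : ℕ) (m : ℤ) (z : ℂ)
    (hz : z ≠ 0) :
    -(1/(α:ℂ)) * (wdzbar (psi α β n m) z - (α:ℂ) * z * psi α β n m z) =
      psi α β n (m+1) z := by
  have hα' : (α : ℂ) ≠ 0 := ofReal_ne_zero.mpr hα.ne'
  by_cases hreg : z ∈ cpowDomain (β + m)
  · have hreg' : z ∈ cpowDomain (β + (m + 1 : ℤ)) := by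
      rwa [Int.cast_add, Int.cast_one, ← add_assoc, ← Int.cast_one, cpowDomain_add_intCast]
    exact raising_of_eventuallyEq hα' hz
      (((isOpen_cpowDomain _).eventually_mem hreg).mono fun w hw => psi_eq_psiClosedForm hw)
      (psi_eq_psiClosedForm hreg')
  simp only [cpowDomain, mem_union, mem_ofPred_eq, not_or, not_and, not_exists] at hreg
  obtain ⟨hre, him⟩ := re_neg_of_notMem_slitPlane hreg.1 hz
  cases n with
  | zero =>
    exact raising_of_eventuallyEq hα' hz
      ((isOpen_ne.eventually_mem hz).mono fun w hw => psi_zero_eq_psiClosedForm hw)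
      (psi_zero_eq_psiClosedForm hz)
  | succ n => exact raising_of_re_neg (hreg.2 hz) n hre him

theorem stmt6 (α β : ℝ) (hα : 0 < α) (n : ℕ) (m : ℤ) (hm : -β - 1 < (m:ℝ)) (z : ℂ)
    (hz : z ≠ 0) :
    -(1/(α:ℂ)) * (wdzbar (psi α β n m) z - (α:ℂ) * z * psi α β n m z) =
      psi α β n (m+1) z :=
  stmt6_general α β hα n m z hz
end

section
/- The Burchnall-type operational formula: for any n-times complex-differentiable function f, (-1)^n e^{α|z|²} (∂/∂z)ⁿ (z^m e^{-α|z|²} f(z)) = (n!/α^m) Σ_{k=0}^{n} ((-1)^k/(k!(n-k)!)) H_{m,n-k}^α(z, z̄) f^{(k)}(z), where H_{m,n}^α are the Itô–Hermite polynomials. -/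
open Complex MeasureTheory

/-!
Because `f` is holomorphic, `∂` reaches `f` only through its complex derivatives, so a Leibniz
rule gives `∂ⁿ(zᵐ e^{-α|z|²} f) = ∑ C(n,k) ∂ⁿ⁻ᵏ(zᵐ e^{-α|z|²}) f⁽ᵏ⁾`, and it remains to see that
`(-1)^q αᵐ e^{α|z|²} ∂^q(zᵐ e^{-α|z|²}) = H_{m,q}`. Conjugation turns `∂̄` into `∂` and
`∂^q e^{-α|z|²} = (-α z̄)^q e^{-α|z|²}` into `(-α z)^q e^{-α|z|²}`, so the same Leibniz rule computes
`∂̄ᵐ ∂^q e^{-α|z|²}` as well; after normalisation both sums equal the explicit formula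
`∑ₖ (-1)ᵏ k! C(m,k) C(q,k) α^{m+q-k} z^{m-k} z̄^{q-k}`.
-/

open scoped ContDiff

def HasWirtingerDerivAt (f : ℂ → ℂ) (a b z : ℂ) : Prop :=
  HasFDerivAt f (a • (1 : ℂ →L[ℝ] ℂ) + b • conjCLE.toContinuousLinearMap) z

namespace HasWirtingerDerivAt

variable {f g : ℂ → ℂ} {a b c d z : ℂ}

theorem wdz_eq (h : HasWirtingerDerivAt f a b z) : wdz f z = a := by
  simp [wdz, h.fderiv]
  ring_nf
  simp only [I_sq]
  ring

theorem mul (hf : HasWirtingerDerivAt f a b z) (hg : HasWirtingerDerivAt g c d z) :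
    HasWirtingerDerivAt (fun w => f w * g w) (a * g z + f z * c) (b * g z + f z * d) z :=
  (HasFDerivAt.mul hf hg).congr_fderiv <| by ext h; simp; ring

theorem const_mul (e : ℂ) (hf : HasWirtingerDerivAt f a b z) :
    HasWirtingerDerivAt (fun w => e * f w) (e * a) (e * b) z :=
  (HasFDerivAt.const_mul hf e).congr_fderiv <| by ext h; simp; ring

theorem sum {ι : Type*} {s : Finset ι} {F : ι → ℂ → ℂ} {A B : ι → ℂ}
    (h : ∀ i ∈ s, HasWirtingerDerivAt (F i) (A i) (B i) z) :
    HasWirtingerDerivAt (fun w => ∑ i ∈ s, F i w) (∑ i ∈ s, A i) (∑ i ∈ s, B i) z :=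
  (HasFDerivAt.fun_sum h).congr_fderiv <| by
    ext h; simp [Finset.sum_mul, Finset.sum_add_distrib]

theorem conj (hf : HasWirtingerDerivAt f a b z) :
    HasWirtingerDerivAt (fun w => starRingEnd ℂ (f w)) (starRingEnd ℂ b) (starRingEnd ℂ a) z :=
  (conjCLE.hasFDerivAt.comp z hf).congr_fderiv <| by ext h; simp; ring

theorem exp (hf : HasWirtingerDerivAt f a b z) :
    HasWirtingerDerivAt (fun w => Complex.exp (f w)) (Complex.exp (f z) * a)
      (Complex.exp (f z) * b) z :=
  ((hasDerivAt_exp (f z)).hasFDerivAt.restrictScalars ℝ |>.comp z hf).congr_fderiv <| by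
    ext h; simp; ring

end HasWirtingerDerivAt

theorem HasDerivAt.hasWirtingerDerivAt {f : ℂ → ℂ} {c z : ℂ} (hf : HasDerivAt f c z) :
    HasWirtingerDerivAt f c 0 z :=
  (hf.hasFDerivAt.restrictScalars ℝ).congr_fderiv <| by ext h; simp; ring

theorem DifferentiableAt.hasWirtingerDerivAt {f : ℂ → ℂ} {z : ℂ}
    (hf : DifferentiableAt ℝ f z) : HasWirtingerDerivAt f (wdz f z) (wdzbar f z) z := by
  refine hf.hasFDerivAt.congr_fderiv (ContinuousLinearMap.ext fun h => ?_)
  have hh : h = h.re • (1 : ℂ) + h.im • I := by simp [re_add_im]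
  conv_lhs => rw [hh, map_add, map_smul, map_smul]
  set A := fderiv ℝ f z 1
  set B := fderiv ℝ f z I
  simp [wdz, wdzbar]
  have hc : starRingEnd ℂ h = h.re - h.im * I := by apply Complex.ext <;> simp
  linear_combination (A/2 - B*I/2) * re_add_im h + (-(A/2) - B*I/2) * hc + (h.im * B) * I_sq

theorem wdzbar_conj (F : ℂ → ℂ) (z : ℂ) :
    wdzbar (fun w => starRingEnd ℂ (F w)) z = starRingEnd ℂ (wdz F z) := by
  have h : fderiv ℝ (fun w => starRingEnd ℂ (F w)) z
      = conjCLE.toContinuousLinearMap.comp (fderiv ℝ F z) :=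
    conjCLE.comp_fderiv (f := F)
  simp [wdzbar, wdz, h, map_ofNat]

theorem iterate_wdzbar_conj (F : ℂ → ℂ) (m : ℕ) :
    wdzbar^[m] (fun w => starRingEnd ℂ (F w)) = fun w => starRingEnd ℂ (wdz^[m] F w) := by
  induction m with
  | zero => rfl
  | succ m ih =>
    rw [Function.iterate_succ_apply', ih, Function.iterate_succ_apply']
    exact funext (wdzbar_conj _)

theorem ContDiff.iterate_wdz {f : ℂ → ℂ} (hf : ContDiff ℝ ∞ f) (n : ℕ) :
    ContDiff ℝ ∞ (wdz^[n] f) := by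
  induction n with
  | zero => exact hf
  | succ n ih =>
    have hderiv : ContDiff ℝ ∞ (fderiv ℝ (wdz^[n] f)) := ih.fderiv_right le_rfl
    rw [Function.iterate_succ_apply']
    unfold wdz
    fun_prop

theorem DifferentiableOn.hasDerivAt_iteratedDeriv {f : ℂ → ℂ} {U : Set ℂ}
    (hf : DifferentiableOn ℂ f U) (hU : IsOpen U) (k : ℕ) {z : ℂ} (hz : z ∈ U) :
    HasDerivAt (iteratedDeriv k f) (iteratedDeriv (k + 1) f z) z := by
  have := ((hf.analyticOnNhd hU).iterated_deriv k z hz).differentiableAt.hasDerivAt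
  simpa [iteratedDeriv_eq_iterate, Function.iterate_succ_apply'] using this

theorem iterate_wdz_mul_of_differentiableOn {g f : ℂ → ℂ} {U : Set ℂ} (hg : ContDiff ℝ ∞ g)
    (hU : IsOpen U) (hf : DifferentiableOn ℂ f U) (n : ℕ) {z : ℂ} (hz : z ∈ U) :
    wdz^[n] (fun w => g w * f w) z =
      ∑ i ∈ Finset.range (n + 1), (n.choose i : ℂ) * (wdz^[n - i] g z * iteratedDeriv i f z) := by
  induction n generalizing z with
  | zero => simp
  | succ n ih =>
    have hev : wdz^[n] (fun w => g w * f w) =ᶠ[nhds z] fun w =>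
        ∑ i ∈ Finset.range (n + 1), (n.choose i : ℂ) * (wdz^[n - i] g w * iteratedDeriv i f w) :=
      Filter.eventually_of_mem (hU.mem_nhds hz) fun w hw => ih hw
    have hterm : ∀ i ∈ Finset.range (n + 1), HasWirtingerDerivAt
        (fun w => (n.choose i : ℂ) * (wdz^[n - i] g w * iteratedDeriv i f w))
        ((n.choose i : ℂ) * (wdz^[n + 1 - i] g z * iteratedDeriv i f z
          + wdz^[n - i] g z * iteratedDeriv (i + 1) f z))
        ((n.choose i : ℂ) * (wdzbar (wdz^[n - i] g) z * iteratedDeriv i f z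
          + wdz^[n - i] g z * 0)) z := by
      intro i hi
      have hG := ((hg.iterate_wdz (n - i)).differentiable (by simp) z).hasWirtingerDerivAt
      rw [Nat.sub_add_comm (Finset.mem_range_succ_iff.mp hi), Function.iterate_succ_apply']
      exact ((hG.mul (hf.hasDerivAt_iteratedDeriv hU i hz).hasWirtingerDerivAt).const_mul _)
    rw [Function.iterate_succ_apply', wdz, hev.fderiv_eq, ← wdz,
      (HasWirtingerDerivAt.sum hterm).wdz_eq, Finset.sum_choose_succ_mul
        (fun i j => wdz^[j] g z * iteratedDeriv i f z), ← Finset.sum_add_distrib]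
    exact Finset.sum_congr rfl fun i _ => by ring

noncomputable def gaussian (α : ℝ) (w : ℂ) : ℂ := Complex.exp (-(α * ‖w‖ ^ 2))

section Gaussian

variable (α : ℝ)

theorem gaussian_eq_exp_mul_conj (w : ℂ) :
    gaussian α w = Complex.exp (-(α * (w * starRingEnd ℂ w))) := by
  rw [gaussian, mul_conj']

theorem conj_gaussian (w : ℂ) : starRingEnd ℂ (gaussian α w) = gaussian α w := by
  rw [gaussian, ← Complex.exp_conj]
  simp

theorem contDiff_gaussian : ContDiff ℝ ∞ (gaussian α) := by
  have hconj : ContDiff ℝ ∞ (fun w : ℂ => starRingEnd ℂ w) := conjCLE.contDiff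
  have hexp : ContDiff ℝ ∞ Complex.exp := Complex.contDiff_exp (𝕜 := ℝ)
  simp only [funext (gaussian_eq_exp_mul_conj α)]
  fun_prop

theorem hasWirtingerDerivAt_gaussian (z : ℂ) :
    HasWirtingerDerivAt (gaussian α) (-α * starRingEnd ℂ z * gaussian α z)
      (-α * z * gaussian α z) z := by
  have hid : HasWirtingerDerivAt (fun w => w) 1 0 z := (hasDerivAt_id z).hasWirtingerDerivAt
  have := ((hid.mul hid.conj).const_mul (-(α : ℂ))).exp
  simp only [funext (gaussian_eq_exp_mul_conj α)]
  convert this using 1 <;> simp <;> ring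

theorem iterate_wdz_gaussian (q : ℕ) :
    wdz^[q] (gaussian α) = fun w => (-α * starRingEnd ℂ w) ^ q * gaussian α w := by
  induction q with
  | zero => simp
  | succ q ih =>
    funext z
    have hpow : HasWirtingerDerivAt (fun w => (-α * starRingEnd ℂ w) ^ q)
        0 (starRingEnd ℂ (q * (-α * z) ^ (q - 1) * -α)) z := by
      have := (((hasDerivAt_id z).const_mul (-(α : ℂ))).pow q).hasWirtingerDerivAt.conj
      simpa using this
    rw [Function.iterate_succ_apply', ih, (hpow.mul (hasWirtingerDerivAt_gaussian α z)).wdz_eq]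
    ring

end Gaussian

theorem pow_mul_sum_choose_mul_descFactorial {R : Type*} [CommSemiring R] (a u v : R)
    (m q : ℕ) :
    a ^ m * ∑ k ∈ Finset.range (q + 1),
        (q.choose k : R) * m.descFactorial k * (a * v) ^ (q - k) * u ^ (m - k) =
      ∑ k ∈ Finset.range (min m q + 1), (k.factorial : R) * m.choose k * q.choose k *
        a ^ (m + q - k) * u ^ (m - k) * v ^ (q - k) := by
  have hsub : Finset.range (min m q + 1) ⊆ Finset.range (q + 1) :=
    Finset.range_subset_range.mpr (by omega)
  rw [Finset.mul_sum, ← Finset.sum_subset hsub fun k hk hk' => ?vanish]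
  case vanish =>
    have hmk : m < k := by simp at hk hk'; omega
    simp [Nat.descFactorial_eq_zero_iff_lt.mpr hmk]
  refine Finset.sum_congr rfl fun k hk => ?_
  obtain ⟨i, rfl⟩ : ∃ i, m = k + i := Nat.exists_eq_add_of_le (by simp at hk; omega)
  obtain ⟨j, rfl⟩ : ∃ j, q = k + j := Nat.exists_eq_add_of_le (by simp at hk; omega)
  rw [Nat.descFactorial_eq_factorial_mul_choose, show k + i + (k + j) - k = k + i + j by omega]
  simp only [Nat.add_sub_cancel_left]
  push_cast
  ring

theorem pow_mul_sum_choose_mul_descFactorial_comm {R : Type*} [CommSemiring R] (a u v : R)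
    (m q : ℕ) :
    a ^ m * ∑ k ∈ Finset.range (q + 1),
        (q.choose k : R) * m.descFactorial k * (a * v) ^ (q - k) * u ^ (m - k) =
      a ^ q * ∑ k ∈ Finset.range (m + 1),
        (m.choose k : R) * q.descFactorial k * (a * u) ^ (m - k) * v ^ (q - k) := by
  rw [pow_mul_sum_choose_mul_descFactorial, pow_mul_sum_choose_mul_descFactorial, min_comm,
    add_comm q m]
  exact Finset.sum_congr rfl fun k _ => by ring

theorem iterate_wdz_gaussian_mul_const_mul_pow (α : ℝ) (c : ℂ) (m q : ℕ) (z : ℂ) :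
    wdz^[q] (fun w => gaussian α w * (c * w ^ m)) z = gaussian α z * c *
      ∑ k ∈ Finset.range (q + 1),
        (q.choose k : ℂ) * m.descFactorial k * (-α * starRingEnd ℂ z) ^ (q - k) * z ^ (m - k) := by
  rw [iterate_wdz_mul_of_differentiableOn (contDiff_gaussian α) isOpen_univ
    (by fun_prop : DifferentiableOn ℂ (fun w => c * w ^ m) Set.univ) q (Set.mem_univ z),
    Finset.mul_sum]
  refine Finset.sum_congr rfl fun k _ => ?_
  simp only [iterate_wdz_gaussian, iteratedDeriv_const_mul_field, iteratedDeriv_pow]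
  ring

theorem IH_eq_iterate_wdz (α : ℝ) (m q : ℕ) (z : ℂ) :
    IH α m q z = α ^ m * (-1) ^ q * Complex.exp (α * ‖z‖ ^ 2) *
      wdz^[q] (fun w => w ^ m * gaussian α w) z := by
  have hconj : wdz^[q] (gaussian α) =
      fun w => starRingEnd ℂ (gaussian α w * ((-α) ^ q * w ^ q)) := by
    funext w
    simp [iterate_wdz_gaussian, conj_gaussian]
    ring
  have hsym := pow_mul_sum_choose_mul_descFactorial_comm (-(α : ℂ)) z (starRingEnd ℂ z) m q
  have hmon : (fun w => w ^ m * gaussian α w) = fun w => gaussian α w * (1 * w ^ m) := by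
    funext w; ring
  change (-1) ^ (m + q) * Complex.exp (α * ‖z‖ ^ 2) * (wdzbar^[m] (wdz^[q] (gaussian α))) z = _
  rw [hconj, iterate_wdzbar_conj]
  beta_reduce
  rw [iterate_wdz_gaussian_mul_const_mul_pow, hmon, iterate_wdz_gaussian_mul_const_mul_pow]
  simp only [map_mul, map_sum, map_pow, map_neg, map_natCast, conj_gaussian, Complex.conj_ofReal,
    Complex.conj_conj]
  set S := ∑ k ∈ Finset.range (q + 1),
    (q.choose k : ℂ) * m.descFactorial k * (-α * starRingEnd ℂ z) ^ (q - k) * z ^ (m - k)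
  have hneg : (-(α : ℂ)) ^ m = (-1) ^ m * α ^ m := by rw [neg_eq_neg_one_mul, mul_pow]
  have hsq : ((-1 : ℂ) ^ m) ^ 2 = 1 := by rw [← pow_mul, mul_comm, pow_mul]; norm_num
  linear_combination (-(-1) ^ (m + q) * Complex.exp (α * ‖z‖ ^ 2) * gaussian α z) * hsym
    + ((-1) ^ (m + q) * Complex.exp (α * ‖z‖ ^ 2) * gaussian α z * S) * hneg
    + ((-1) ^ q * Complex.exp (α * ‖z‖ ^ 2) * gaussian α z * α ^ m * S) * hsq

theorem stmt15 (α : ℝ) (hα : 0 < α) (m n : ℕ) (U : Set ℂ) (hU : IsOpen U)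
    (f : ℂ → ℂ) (hf : DifferentiableOn ℂ f U) (z : ℂ) (hz : z ∈ U) :
    (-1:ℂ)^n * Complex.exp (α * ‖z‖^2) *
        (wdz^[n] (fun w => w^m * Complex.exp (-(α * ‖w‖^2)) * f w)) z =
      (n.factorial : ℂ) / (α:ℂ)^m * ∑ k ∈ Finset.range (n+1),
        (-1:ℂ)^k / ((k.factorial : ℂ) * ((n-k).factorial : ℂ)) * IH α m (n-k) z *
          iteratedDeriv k f z := by
  have hg : ContDiff ℝ ∞ (fun w => w ^ m * gaussian α w) := by
    have := contDiff_gaussian α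
    fun_prop
  change _ * (wdz^[n] (fun w => w ^ m * gaussian α w * f w)) z = _
  rw [iterate_wdz_mul_of_differentiableOn hg hU hf n hz, Finset.mul_sum, Finset.mul_sum]
  refine Finset.sum_congr rfl fun k hk => ?_
  have hkn : k ≤ n := Finset.mem_range_succ_iff.mp hk
  have hα' : (α : ℂ) ^ m ≠ 0 := pow_ne_zero _ (ofReal_ne_zero.mpr hα.ne')
  have hsign : (-1 : ℂ) ^ n = (-1) ^ k * (-1) ^ (n - k) := by
    rw [← pow_add, Nat.add_sub_cancel' hkn]
  rw [IH_eq_iterate_wdz, Nat.cast_choose ℂ hkn, hsign]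
  field_simp
end

section
/- For every z, w ∈ ℂ and real α > 0, the Gaussian reproducing identity e^{αzw} = (α/π) ∫_ℂ exp(-α|ξ|² + α(ξz + ξ̄w)) dλ(ξ) holds, where dλ is Lebesgue measure on ℂ. -/
open Complex MeasureTheory

open Real ComplexConjugate

/- Writing ξ = x + iy, the Gaussian `exp(-b|ξ|² + cξ + dξ̄)` factors into two one-dimensional
Gaussians, in x with linear coefficient c + d and in y with linear coefficient i(c - d).
Each contributes `(π/b)^{1/2} exp((linear coefficient)²/(4b))`, and since
`(c + d)² - (c - d)² = 4cd` the product is `(π/b) exp(cd/b)`. With b = α, c = αz, d = αw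
this is the reproducing identity. -/

theorem Complex.integral_eq_integral_prod {E : Type*} [NormedAddCommGroup E] [NormedSpace ℝ E]
    (f : ℂ → E) : ∫ ξ : ℂ, f ξ = ∫ p : ℝ × ℝ, f (p.1 + p.2 * I) := by
  rw [← volume_preserving_equiv_real_prod.symm.integral_comp
    measurableEquivRealProd.symm.measurableEmbedding]
  simp [measurableEquivRealProd, equivRealProdCLM_symm_apply]

theorem integral_cexp_neg_mul_sq_add_mul {b : ℂ} (hb : 0 < b.re) (c : ℂ) :
    ∫ x : ℝ, cexp (-b * x ^ 2 + c * x) = (π / b) ^ (1 / 2 : ℂ) * cexp (c ^ 2 / (4 * b)) := by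
  have hb' : (-b).re < 0 := by simpa using hb
  simpa [div_neg] using integral_cexp_quadratic hb' c 0

theorem integral_cexp_neg_mul_sq_norm_add_mul_add_mul_conj {b : ℂ} (hb : 0 < b.re) (c d : ℂ) :
    ∫ ξ : ℂ, cexp (-b * (‖ξ‖ : ℂ) ^ 2 + (c * ξ + d * conj ξ)) = π / b * cexp (c * d / b) := by
  have hsplit (x y : ℝ) :
      cexp (-b * (‖(x + y * I : ℂ)‖ : ℂ) ^ 2 + (c * (x + y * I) + d * conj (x + y * I))) =
        cexp (-b * x ^ 2 + (c + d) * x) * cexp (-b * y ^ 2 + I * (c - d) * y) := by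
    have hnorm : (‖(x + y * I : ℂ)‖ : ℂ) ^ 2 = (x : ℂ) ^ 2 + (y : ℂ) ^ 2 := by
      rw [← ofReal_pow, Complex.sq_norm, normSq_add_mul_I]
      push_cast
      ring
    rw [← Complex.exp_add, hnorm]
    simp only [map_add, map_mul, conj_I, conj_ofReal]
    ring_nf
  have hexponent : (c + d) ^ 2 / (4 * b) + (I * (c - d)) ^ 2 / (4 * b) = c * d / b := by
    rw [mul_pow, I_sq]
    ring
  have hπb : (π : ℂ) / b ≠ 0 :=
    div_ne_zero (ofReal_ne_zero.mpr pi_ne_zero) (by rintro rfl; simp at hb)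
  calc ∫ ξ : ℂ, cexp (-b * (‖ξ‖ : ℂ) ^ 2 + (c * ξ + d * conj ξ))
      = ∫ p : ℝ × ℝ, cexp (-b * p.1 ^ 2 + (c + d) * p.1) *
          cexp (-b * p.2 ^ 2 + I * (c - d) * p.2) := by
        rw [Complex.integral_eq_integral_prod]
        exact integral_congr_ae (Filter.Eventually.of_forall fun p => hsplit p.1 p.2)
    _ = ((π / b) ^ (1 / 2 : ℂ) * (π / b) ^ (1 / 2 : ℂ)) *
          cexp ((c + d) ^ 2 / (4 * b) + (I * (c - d)) ^ 2 / (4 * b)) := by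
        rw [Measure.volume_eq_prod,
          integral_prod_mul (f := fun x : ℝ => cexp (-b * x ^ 2 + (c + d) * x))
            (g := fun y : ℝ => cexp (-b * y ^ 2 + I * (c - d) * y)),
          integral_cexp_neg_mul_sq_add_mul hb, integral_cexp_neg_mul_sq_add_mul hb,
          Complex.exp_add]
        ring
    _ = π / b * cexp (c * d / b) := by
        rw [← cpow_add _ _ hπb, hexponent]
        norm_num

theorem stmt19 (α : ℝ) (hα : 0 < α) (z w : ℂ) :
    Complex.exp ((α:ℂ)*z*w) =
      ((α / Real.pi : ℝ) : ℂ) *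
        ∫ ξ : ℂ, Complex.exp (-(α:ℂ) * (‖ξ‖ : ℂ)^2 +
          (α:ℂ) * (ξ*z + (starRingEnd ℂ ξ)*w)) := by
  have hα' : (α : ℂ) ≠ 0 := ofReal_ne_zero.mpr hα.ne'
  have hπ : (π : ℂ) ≠ 0 := ofReal_ne_zero.mpr Real.pi_ne_zero
  have hlinear (ξ : ℂ) : (α : ℂ) * (ξ * z + conj ξ * w) = α * z * ξ + α * w * conj ξ := by ring
  simp_rw [hlinear]
  rw [integral_cexp_neg_mul_sq_norm_add_mul_add_mul_conj (by simpa using hα)]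
  push_cast
  field_simp
end
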